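/- For every real z ≠ 0 and all integers p ≥ 0 and ℓ ≥ 0: Σ_{k=0}^{ℓ} (2k+1)/(k−p−3/2)_{2p+5} · [j_k(z)]² = (2(p+1)/(z²(2p+3))) · Σ_{k=0}^{ℓ} (2k+1)/(k−p−1/2)_{2p+3} · [j_k(z)]² − [j_ℓ(z)]²/((2p+3)·(ℓ−p+1/2)_{2p+3}) − [j_{ℓ+1}(z)]²/((2p+3)·(ℓ−p−1/2)_{2p+3}) + 2·j_ℓ(z)·j_{ℓ+1}(z)/(z(2p+3)·(ℓ−p+1/2)_{2p+2}) + (1/(−p−3/2)_{2p+4})·((p+1)·j_0(2z)/z² + j_1(2z)/z). -/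

import Mathlib

open Finset

/-- Auxiliary: `sphjAux z n` is the spherical Bessel function `j_{n-1}(z)`. -/
noncomputable def sphjAux (z : ℝ) : ℕ → ℝ
  | 0 => Real.cos z / z
  | 1 => Real.sin z / z
  | (n + 2) => ((2 * (n : ℝ) + 1) / z) * sphjAux z (n + 1) - sphjAux z n

/-- The spherical Bessel function `j_k(z)` for integer `k ≥ -1`. -/
noncomputable def sphj (k : ℤ) (z : ℝ) : ℝ := sphjAux z (k + 1).toNat

/-- The Pochhammer symbol `(f)_n = f (f+1) ⋯ (f+n-1)`, with `(f)_0 = 1`. -/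
noncomputable def poch (f : ℝ) (n : ℕ) : ℝ := ∏ i ∈ Finset.range n, (f + (i : ℝ))

lemma poch_succ_left (f : ℝ) (n : ℕ) : poch f (n+1) = f * poch (f+1) n := by
  unfold poch
  rw [Finset.prod_range_succ']
  simp only [Nat.cast_zero, add_zero, Nat.cast_add, Nat.cast_one]
  rw [mul_comm]
  congr 1
  exact Finset.prod_congr rfl (fun i _ => by ring)

lemma poch_succ_right (f : ℝ) (n : ℕ) : poch f (n+1) = poch f n * (f + n) :=
  Finset.prod_range_succ _ _

lemma half_ne_zero' (m : ℤ) : (m:ℝ) + 1/2 ≠ 0 := by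
  intro h
  have h2 : ((2*m+1 : ℤ) : ℝ) = 0 := by push_cast; linarith
  have h3 : (2*m+1 : ℤ) = 0 := by exact_mod_cast h2
  omega

lemma poch_half_ne_zero (m : ℤ) (n : ℕ) : poch ((m:ℝ) + 1/2) n ≠ 0 := by
  unfold poch
  rw [Finset.prod_ne_zero_iff]
  intro i _
  have := half_ne_zero' (m + i)
  push_cast at this ⊢
  intro h; exact this (by linarith)

lemma sphj_natCast (n : ℕ) (z : ℝ) : sphj (n : ℤ) z = sphjAux z (n+1) := by
  unfold sphj; congr 1

lemma sphjAux_rec (n : ℕ) (z : ℝ) :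
    sphjAux z (n+3) = ((2*((n:ℝ)+1)+1)/z) * sphjAux z (n+2) - sphjAux z (n+1) := by
  show sphjAux z ((n+1)+2) = _
  rw [sphjAux]
  push_cast
  ring

set_option maxHeartbeats 4000000 in
lemma stepKey3 (a b z X w Q1 Q2 Q3 : ℝ) (hz : z ≠ 0) (hw : 2*w+3 ≠ 0)
    (hX : X ≠ 0) (hX1 : X+1 ≠ 0) (hQ1 : Q1 ≠ 0)
    (hu1 : X+(2*w+2) ≠ 0) (hu2 : X+(2*w+3) ≠ 0) (hu3 : X+(2*w+4) ≠ 0)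
    (hq2 : X * Q2 = Q1 * (X+(2*w+2))) (hq3 : (X+1) * Q3 = Q2 * (X+(2*w+3))) :
    (2*X+2*w+4) / (Q1*(X+(2*w+2))*(X+(2*w+3))*(X+(2*w+4))) * b^2
      = 2*(w+1)/(z^2*(2*w+3)) * ((2*X+2*w+4) / (Q2*(X+(2*w+3))) * b^2)
        - b^2 / ((2*w+3)*(Q3*(X+(2*w+4))))
        - ((2*X+2*w+4)/z*b - a)^2 / ((2*w+3)*(Q2*(X+(2*w+3))))
        + 2*b*((2*X+2*w+4)/z*b - a) / (z*(2*w+3)*Q3)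
        + a^2 / ((2*w+3)*(Q2*(X+(2*w+3))))
        + b^2 / ((2*w+3)*(Q1*(X+(2*w+2))))
        - 2*a*b / (z*(2*w+3)*Q2) := by
  have hQ2 : Q2 = Q1 * (X+(2*w+2)) / X := by
    rw [eq_div_iff hX]; linear_combination hq2
  have hQ3 : Q3 = Q2 * (X+(2*w+3)) / (X+1) := by
    rw [eq_div_iff hX1]; linear_combination hq3
  rw [hQ3, hQ2]
  field_simp
  ring

set_option maxHeartbeats 2000000 in
/-- Recurrence step of the first hierarchy of sum rules. -/
theorem first_hierarchy_recurrence (z : ℝ) (hz : z ≠ 0) (p ℓ : ℕ) :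
    ∑ k ∈ Finset.range (ℓ + 1),
        (2 * (k : ℝ) + 1) / poch ((k : ℝ) - p - 3 / 2) (2 * p + 5) * (sphj k z) ^ 2 =
      2 * ((p : ℝ) + 1) / (z ^ 2 * (2 * (p : ℝ) + 3)) *
          ∑ k ∈ Finset.range (ℓ + 1),
            (2 * (k : ℝ) + 1) / poch ((k : ℝ) - p - 1 / 2) (2 * p + 3) * (sphj k z) ^ 2 -
        (sphj ℓ z) ^ 2 / ((2 * (p : ℝ) + 3) * poch ((ℓ : ℝ) - p + 1 / 2) (2 * p + 3)) -
        (sphj (ℓ + 1) z) ^ 2 / ((2 * (p : ℝ) + 3) * poch ((ℓ : ℝ) - p - 1 / 2) (2 * p + 3)) +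
        2 * sphj ℓ z * sphj (ℓ + 1) z /
          (z * (2 * (p : ℝ) + 3) * poch ((ℓ : ℝ) - p + 1 / 2) (2 * p + 2)) +
        1 / poch (-(p : ℝ) - 3 / 2) (2 * p + 4) *
          (((p : ℝ) + 1) / z ^ 2 * sphj 0 (2 * z) + 1 / z * sphj 1 (2 * z)) := by
  induction ℓ with
  | zero =>
    simp only [Finset.sum_range_one, Nat.cast_zero, zero_sub, zero_add]
    have hp0 : (0:ℝ) ≤ p := Nat.cast_nonneg p
    have hj0 : sphj 0 z = Real.sin z / z := rfl
    have hj1 : sphj 1 z = 1/z*(Real.sin z/z) - Real.cos z/z := by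
      show sphjAux z (0+2) = _
      rw [sphjAux]
      norm_num [sphjAux]
    have hj02 : sphj 0 (2*z) = 2*Real.sin z*Real.cos z/(2*z) := by
      rw [show sphj 0 (2*z) = Real.sin (2*z)/(2*z) from rfl, Real.sin_two_mul]
    have hj12 : sphj 1 (2*z) = 1/(2*z)*(2*Real.sin z*Real.cos z/(2*z))
        - (Real.cos z^2 - Real.sin z^2)/(2*z) := by
      show sphjAux (2*z) (0+2) = _
      rw [sphjAux]
      norm_num [sphjAux, Real.sin_two_mul, Real.cos_two_mul']
    have hP4 : poch (-(p:ℝ) - 3/2) (2*p+4)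
        = (-(p:ℝ)-3/2)*(-(p:ℝ)-1/2)*poch (-(p:ℝ)+1/2) (2*p+2) := by
      rw [show 2*p+4 = (2*p+2)+1+1 by omega, poch_succ_left, poch_succ_left,
        show (-(p:ℝ)-3/2)+1+1 = -(p:ℝ)+1/2 by ring]
      ring
    have hP5 : poch (-(p:ℝ) - 3/2) (2*p+5)
        = (-(p:ℝ)-3/2)*(-(p:ℝ)-1/2)*poch (-(p:ℝ)+1/2) (2*p+2)*((p:ℝ)+5/2) := by
      rw [show 2*p+5 = (2*p+4)+1 by omega, poch_succ_right, hP4]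
      push_cast
      ring
    have hm13 : poch (-(p:ℝ) - 1/2) (2*p+3) = (-(p:ℝ)-1/2)*poch (-(p:ℝ)+1/2) (2*p+2) := by
      rw [show 2*p+3 = (2*p+2)+1 by omega, poch_succ_left,
        show (-(p:ℝ)-1/2)+1 = -(p:ℝ)+1/2 by ring]
    have hp13 : poch (-(p:ℝ) + 1/2) (2*p+3) = poch (-(p:ℝ)+1/2) (2*p+2)*((p:ℝ)+5/2) := by
      rw [show 2*p+3 = (2*p+2)+1 by omega, poch_succ_right]
      push_cast
      ring
    have hR : poch (-(p:ℝ)+1/2) (2*p+2) ≠ 0 := by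
      have := poch_half_ne_zero (-(p:ℤ)) (2*p+2)
      push_cast at this
      exact this
    have ha : (-(p:ℝ)-3/2) ≠ 0 := ne_of_lt (by linarith)
    have hb : (-(p:ℝ)-1/2) ≠ 0 := ne_of_lt (by linarith)
    have hc : ((p:ℝ)+5/2) ≠ 0 := by positivity
    have hd : (2*(p:ℝ)+3) ≠ 0 := by positivity
    rw [hj0, hj1, hj02, hj12, hP4, hP5, hm13, hp13]
    set R := poch (-(p:ℝ)+1/2) (2*p+2) with hRdef
    set q := (p:ℝ) with hq
    have ha2 : -(q*2)-3 ≠ 0 := by intro h; simp only [hq] at h; nlinarith [Nat.cast_nonneg (α := ℝ) p]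
    have hb2 : -(q*2)-1 ≠ 0 := by intro h; simp only [hq] at h; nlinarith [Nat.cast_nonneg (α := ℝ) p]
    have hc2 : q*2+5 ≠ 0 := by intro h; simp only [hq] at h; nlinarith [Nat.cast_nonneg (α := ℝ) p]
    have ha3 : -(2*q)-3 ≠ 0 := by intro h; simp only [hq] at h; nlinarith [Nat.cast_nonneg (α := ℝ) p]
    have hb3 : -(2*q)-1 ≠ 0 := by intro h; simp only [hq] at h; nlinarith [Nat.cast_nonneg (α := ℝ) p]
    field_simp
    ring
  | succ n ih =>
    rw [Finset.sum_range_succ, Finset.sum_range_succ ((fun k => (2 * (k : ℝ) + 1) / poch ((k : ℝ) - p - 1 / 2) (2 * p + 3) * (sphj k z) ^ 2)), ih]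
    push_cast
    have en : sphj (n : ℤ) z = sphjAux z (n+1) := sphj_natCast n z
    have en1 : sphj ((n:ℤ)+1) z = sphjAux z (n+2) := by
      rw [show ((n:ℤ)+1) = ((n+1:ℕ):ℤ) by push_cast; ring, sphj_natCast]
    have en2 : sphj ((n:ℤ)+1+1) z = sphjAux z (n+3) := by
      rw [show ((n:ℤ)+1+1) = ((n+2:ℕ):ℤ) by push_cast; ring, sphj_natCast]
    rw [en, en1, en2, sphjAux_rec]
    rw [show ((n:ℝ) + 1 - (p:ℝ) - 3/2 : ℝ) = ((n:ℝ) - (p:ℝ) - 1/2) by ring,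
        show ((n:ℝ) + 1 - (p:ℝ) - 1/2 : ℝ) = ((n:ℝ) - (p:ℝ) - 1/2) + 1 by ring,
        show ((n:ℝ) - (p:ℝ) + 1/2 : ℝ) = ((n:ℝ) - (p:ℝ) - 1/2) + 1 by ring,
        show ((n:ℝ) + 1 - (p:ℝ) + 1/2 : ℝ) = ((n:ℝ) - (p:ℝ) - 1/2) + 2 by ring]
    have hX0 : ((n:ℝ) - (p:ℝ) - 1/2) ≠ 0 := by
      have := half_ne_zero' ((n:ℤ) - p - 1)
      rwa [show (((n:ℤ) - p - 1 : ℤ):ℝ) + 1/2 = ((n:ℝ) - (p:ℝ) - 1/2) by push_cast; ring] at this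
    have hX1 : ((n:ℝ) - (p:ℝ) - 1/2) + 1 ≠ 0 := by
      have := half_ne_zero' ((n:ℤ) - p)
      rwa [show (((n:ℤ) - p : ℤ):ℝ) + 1/2 = ((n:ℝ) - (p:ℝ) - 1/2) + 1 by push_cast; ring] at this
    have hQ : poch ((n:ℝ) - (p:ℝ) - 1/2) (2*p+2) ≠ 0 := by
      have := poch_half_ne_zero ((n:ℤ) - p - 1) (2*p+2)
      rwa [show (((n:ℤ) - p - 1 : ℤ):ℝ) + 1/2 = ((n:ℝ) - (p:ℝ) - 1/2) by push_cast; ring] at this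
    have hu1 : ((n:ℝ) - (p:ℝ) - 1/2) + (2*(p:ℝ)+2) ≠ 0 := by
      rw [show ((n:ℝ) - (p:ℝ) - 1/2) + (2*(p:ℝ)+2) = (n:ℝ) + (p:ℝ) + 3/2 by ring]; positivity
    have hu2 : ((n:ℝ) - (p:ℝ) - 1/2) + (2*(p:ℝ)+3) ≠ 0 := by
      rw [show ((n:ℝ) - (p:ℝ) - 1/2) + (2*(p:ℝ)+3) = (n:ℝ) + (p:ℝ) + 5/2 by ring]; positivity
    have hu3 : ((n:ℝ) - (p:ℝ) - 1/2) + (2*(p:ℝ)+4) ≠ 0 := by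
      rw [show ((n:ℝ) - (p:ℝ) - 1/2) + (2*(p:ℝ)+4) = (n:ℝ) + (p:ℝ) + 7/2 by ring]; positivity
    have hd : 2*(p:ℝ)+3 ≠ 0 := by positivity
    have hA : poch ((n:ℝ) - (p:ℝ) - 1/2) (2*p+5)
        = poch ((n:ℝ) - (p:ℝ) - 1/2) (2*p+2) * (((n:ℝ) - (p:ℝ) - 1/2)+(2*(p:ℝ)+2)) * (((n:ℝ) - (p:ℝ) - 1/2)+(2*(p:ℝ)+3)) * (((n:ℝ) - (p:ℝ) - 1/2)+(2*(p:ℝ)+4)) := by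
      rw [show 2*p+5 = (2*p+2)+1+1+1 by omega, poch_succ_right, poch_succ_right,
        poch_succ_right]
      push_cast; ring
    have hB : poch ((n:ℝ) - (p:ℝ) - 1/2) (2*p+3) = poch ((n:ℝ) - (p:ℝ) - 1/2) (2*p+2) * (((n:ℝ) - (p:ℝ) - 1/2)+(2*(p:ℝ)+2)) := by
      rw [show 2*p+3 = (2*p+2)+1 by omega, poch_succ_right]
      push_cast; ring
    have hB4 : poch ((n:ℝ) - (p:ℝ) - 1/2) (2*p+4)
        = poch ((n:ℝ) - (p:ℝ) - 1/2) (2*p+2) * (((n:ℝ) - (p:ℝ) - 1/2)+(2*(p:ℝ)+2)) * (((n:ℝ) - (p:ℝ) - 1/2)+(2*(p:ℝ)+3)) := by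
      rw [show 2*p+4 = (2*p+2)+1+1 by omega, poch_succ_right, poch_succ_right]
      push_cast; ring
    have hC : poch (((n:ℝ) - (p:ℝ) - 1/2)+1) (2*p+3)
        = poch (((n:ℝ) - (p:ℝ) - 1/2)+1) (2*p+2) * (((n:ℝ) - (p:ℝ) - 1/2)+(2*(p:ℝ)+3)) := by
      rw [show 2*p+3 = (2*p+2)+1 by omega, poch_succ_right]
      push_cast; ring
    have hE : poch (((n:ℝ) - (p:ℝ) - 1/2)+2) (2*p+3)
        = poch (((n:ℝ) - (p:ℝ) - 1/2)+2) (2*p+2) * (((n:ℝ) - (p:ℝ) - 1/2)+(2*(p:ℝ)+4)) := by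
      rw [show 2*p+3 = (2*p+2)+1 by omega, poch_succ_right]
      push_cast; ring
    have hq2 : ((n:ℝ) - (p:ℝ) - 1/2) * poch (((n:ℝ) - (p:ℝ) - 1/2)+1) (2*p+2)
        = poch ((n:ℝ) - (p:ℝ) - 1/2) (2*p+2) * (((n:ℝ) - (p:ℝ) - 1/2)+(2*(p:ℝ)+2)) := by
      have h1 := poch_succ_left ((n:ℝ) - (p:ℝ) - 1/2) (2*p+2)
      have h2 := poch_succ_right ((n:ℝ) - (p:ℝ) - 1/2) (2*p+2)
      rw [← h1, h2]
      push_cast; ring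
    have hq3 : (((n:ℝ) - (p:ℝ) - 1/2)+1) * poch (((n:ℝ) - (p:ℝ) - 1/2)+2) (2*p+2)
        = poch (((n:ℝ) - (p:ℝ) - 1/2)+1) (2*p+2) * (((n:ℝ) - (p:ℝ) - 1/2)+(2*(p:ℝ)+3)) := by
      have h1 := poch_succ_left (((n:ℝ) - (p:ℝ) - 1/2)+1) (2*p+2)
      have h2 := poch_succ_right (((n:ℝ) - (p:ℝ) - 1/2)+1) (2*p+2)
      rw [show ((n:ℝ) - (p:ℝ) - 1/2)+1+1 = ((n:ℝ) - (p:ℝ) - 1/2)+2 by ring] at h1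
      rw [← h1, h2]
      push_cast; ring
    rw [hA, hB, hC, hE]
    linear_combination stepKey3 (sphjAux z (n+1)) (sphjAux z (n+2)) z ((n:ℝ) - (p:ℝ) - 1/2) (p:ℝ)
      (poch ((n:ℝ) - (p:ℝ) - 1/2) (2*p+2)) (poch (((n:ℝ) - (p:ℝ) - 1/2)+1) (2*p+2)) (poch (((n:ℝ) - (p:ℝ) - 1/2)+2) (2*p+2))
      hz hd hX0 hX1 hQ hu1 hu2 hu3 hq2 hq3
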